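/- arXiv:0708.3201 — 5 statements merged into one kernel-verified Lean document; each statement's English description precedes it below -/
import Mathlib

section
/- Let A and B be real symmetric n×n matrices. Then ‖[A,B]‖² ≤ 2‖A‖²·‖B‖², where [A,B] = AB − BA and ‖·‖ is the Frobenius norm. (This is the DDVV inequality P(n,2).) -/
open Matrix BigOperators

/-- Frobenius norm squared of a real `n × n` matrix: the sum of the squares of all entries. -/
noncomputable def frobSq {n : ℕ} (A : Matrix (Fin n) (Fin n) ℝ) : ℝ :=
  ∑ i, ∑ j, (A i j) ^ 2

/-- The commutator `[A, B] = A * B - B * A`. -/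
def mcomm {n : ℕ} (A B : Matrix (Fin n) (Fin n) ℝ) : Matrix (Fin n) (Fin n) ℝ :=
  A * B - B * A

lemma frobSq_eq_trace {n : ℕ} (M : Matrix (Fin n) (Fin n) ℝ) :
    frobSq M = Matrix.trace (Mᴴ * M) := by
  simp only [frobSq, Matrix.trace, Matrix.diag_apply, Matrix.mul_apply,
    Matrix.conjTranspose_apply, star_trivial, sq]
  rw [Finset.sum_comm]

lemma frobSq_conj {n : ℕ} (P M : Matrix (Fin n) (Fin n) ℝ)
    (h : star P * P = 1) : frobSq (P * M * star P) = frobSq M := by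
  rw [frobSq_eq_trace, frobSq_eq_trace]
  have : (P * M * star P)ᴴ * (P * M * star P) = P * (Mᴴ * M) * star P := by
    simp only [Matrix.conjTranspose_mul, Matrix.conjTranspose_conjTranspose]
    have hstar : (star P : Matrix (Fin n) (Fin n) ℝ) = Pᴴ := rfl
    rw [hstar, show Pᴴᴴ = P from Matrix.conjTranspose_conjTranspose P]
    calc P * (Mᴴ * Pᴴ) * (P * M * Pᴴ)
        = P * Mᴴ * (Pᴴ * P) * M * Pᴴ := by noncomm_ring
      _ = P * (Mᴴ * M) * Pᴴ := by
          rw [show Pᴴ * P = 1 from h]; noncomm_ring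
  rw [this, Matrix.trace_mul_comm, ← mul_assoc, show (star P : Matrix (Fin n) (Fin n) ℝ) * P = 1 from h, one_mul]

lemma mcomm_conj {n : ℕ} (P A B : Matrix (Fin n) (Fin n) ℝ)
    (h : star P * P = 1) :
    mcomm (P * A * star P) (P * B * star P) = P * mcomm A B * star P := by
  simp only [mcomm]
  have h1 : (star P : Matrix (Fin n) (Fin n) ℝ) * P = 1 := h
  calc P * A * star P * (P * B * star P) - P * B * star P * (P * A * star P)
      = P * A * (star P * P) * B * star P - P * B * (star P * P) * A * star P := by
        noncomm_ring
    _ = P * (A * B - B * A) * star P := by rw [h1]; noncomm_ring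

lemma frobSq_diagonal {n : ℕ} (d : Fin n → ℝ) :
    frobSq (Matrix.diagonal d) = ∑ i, d i ^ 2 := by
  unfold frobSq
  congr 1
  ext i
  rw [Finset.sum_eq_single i]
  · simp [Matrix.diagonal_apply_eq]
  · intro j _ hj
    simp [Matrix.diagonal_apply_ne' d hj]
  · simp

lemma diag_case {n : ℕ} (d : Fin n → ℝ) (M : Matrix (Fin n) (Fin n) ℝ) :
    frobSq (mcomm (Matrix.diagonal d) M) ≤ 2 * (∑ i, d i ^ 2) * frobSq M := by
  have hS : ∀ k, d k ^ 2 ≤ ∑ i, d i ^ 2 := by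
    intro k
    exact Finset.single_le_sum (fun i _ => sq_nonneg (d i)) (Finset.mem_univ k)
  have hentry : ∀ i j, mcomm (Matrix.diagonal d) M i j = (d i - d j) * M i j := by
    intro i j
    simp [mcomm, Matrix.sub_apply, Matrix.diagonal_mul, Matrix.mul_diagonal]
    ring
  unfold frobSq
  rw [Finset.mul_sum]
  apply Finset.sum_le_sum
  intro i _
  rw [Finset.mul_sum]
  apply Finset.sum_le_sum
  intro j _
  rw [hentry i j]
  have hSnn : (0:ℝ) ≤ ∑ k, d k ^ 2 := Finset.sum_nonneg fun k _ => sq_nonneg _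
  have h1 : (d i - d j) ^ 2 ≤ 2 * (∑ k, d k ^ 2) := by
    by_cases hij : i = j
    · subst hij; simpa using by positivity
    · have hpair : d i ^ 2 + d j ^ 2 ≤ ∑ k, d k ^ 2 := by
        have := Finset.sum_le_sum_of_subset_of_nonneg
          (Finset.subset_univ ({i, j} : Finset (Fin n)))
          (fun k _ _ => sq_nonneg (d k))
        rwa [Finset.sum_pair hij] at this
      nlinarith [sq_nonneg (d i + d j)]
  calc ((d i - d j) * M i j) ^ 2 = (d i - d j) ^ 2 * M i j ^ 2 := by ring
    _ ≤ 2 * (∑ k, d k ^ 2) * M i j ^ 2 := by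
        exact mul_le_mul_of_nonneg_right h1 (sq_nonneg _)

/-- P(n,2): for real symmetric matrices, `‖[A,B]‖² ≤ 2 ‖A‖² ‖B‖²`. -/
theorem ddvv_P_n_2 (n : ℕ) (A B : Matrix (Fin n) (Fin n) ℝ)
    (hA : A.IsSymm) (hB : B.IsSymm) :
    frobSq (mcomm A B) ≤ 2 * frobSq A * frobSq B := by
  have hA' : A.IsHermitian := by
    rwa [Matrix.IsHermitian, Matrix.conjTranspose_eq_transpose_of_trivial]
  set U : Matrix (Fin n) (Fin n) ℝ := (hA'.eigenvectorUnitary : Matrix (Fin n) (Fin n) ℝ) with hU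
  set d : Fin n → ℝ := RCLike.ofReal ∘ hA'.eigenvalues with hd
  have hspec : A = U * Matrix.diagonal d * star U := hA'.spectral_theorem
  set P : Matrix (Fin n) (Fin n) ℝ := star U with hP
  have hPU : star P * P = 1 := by
    rw [hP, star_star]
    exact (Matrix.mem_unitaryGroup_iff.mp hA'.eigenvectorUnitary.2)
  have hUP : star U * U = 1 := by
    exact (Matrix.mem_unitaryGroup_iff'.mp hA'.eigenvectorUnitary.2)
  have hDA : P * A * star P = Matrix.diagonal d := by
    rw [hspec, hP, star_star]
    calc star U * (U * Matrix.diagonal d * star U) * U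
        = (star U * U) * Matrix.diagonal d * (star U * U) := by noncomm_ring
      _ = Matrix.diagonal d := by rw [hUP]; simp
  have key : frobSq (mcomm A B) = frobSq (mcomm (Matrix.diagonal d) (P * B * star P)) := by
    rw [← hDA, mcomm_conj P A B hPU, frobSq_conj P _ hPU]
  have hfA : frobSq A = ∑ i, d i ^ 2 := by
    rw [← frobSq_diagonal d, ← hDA, frobSq_conj P _ hPU]
  have hfB : frobSq B = frobSq (P * B * star P) := (frobSq_conj P B hPU).symm
  rw [key, hfA, hfB]
  exact diag_case d (P * B * star P)
end

section
/- Fix n ≥ 1. Suppose that for all real n×n matrices A₁, A₂, A₃, A₄ with A₁, A₂ symmetric and A₃, A₄ skew-symmetric one has (‖A₁‖² + ‖A₂‖² + ‖A₃‖² + ‖A₄‖²)² ≥ 2 Σ_{1≤i<j≤4} ‖[A_i,A_j]‖² (the inequality P(n,2,2)). Then for all real n×n matrices X and Y one has ‖[X,Y]‖² ≤ 2‖X‖²·‖Y‖² (the Böttcher–Wenzel inequality Q(n)). -/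
open Matrix BigOperators

namespace BWaux

variable {n : ℕ}

noncomputable def ip (A B : Matrix (Fin n) (Fin n) ℝ) : ℝ := ∑ i, ∑ j, A i j * B i j

lemma frobSq_eq_ip (A : Matrix (Fin n) (Fin n) ℝ) : frobSq A = ip A A := by
  simp [frobSq, ip, sq]

lemma ip_eq_trace (A B : Matrix (Fin n) (Fin n) ℝ) : ip A B = Matrix.trace (A * Bᵀ) := by
  simp [ip, Matrix.trace, Matrix.mul_apply, Matrix.diag]

lemma ip_comm (A B : Matrix (Fin n) (Fin n) ℝ) : ip A B = ip B A := by
  simp [ip, mul_comm]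

lemma ip_add_left (A B C : Matrix (Fin n) (Fin n) ℝ) : ip (A + B) C = ip A C + ip B C := by
  simp [ip, add_mul, Finset.sum_add_distrib]

lemma ip_smul_left (c : ℝ) (A B : Matrix (Fin n) (Fin n) ℝ) : ip (c • A) B = c * ip A B := by
  simp [ip, Finset.mul_sum, mul_assoc]

lemma ip_smul_right (c : ℝ) (A B : Matrix (Fin n) (Fin n) ℝ) : ip A (c • B) = c * ip A B := by
  rw [ip_comm, ip_smul_left, ip_comm]

lemma frobSq_nonneg (A : Matrix (Fin n) (Fin n) ℝ) : 0 ≤ frobSq A :=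
  Finset.sum_nonneg fun i _ => Finset.sum_nonneg fun j _ => sq_nonneg _

lemma frobSq_smul (c : ℝ) (A : Matrix (Fin n) (Fin n) ℝ) : frobSq (c • A) = c ^ 2 * frobSq A := by
  simp [frobSq, mul_pow, Finset.mul_sum]

lemma frobSq_add (A B : Matrix (Fin n) (Fin n) ℝ) :
    frobSq (A + B) = frobSq A + frobSq B + 2 * ip A B := by
  simp only [frobSq, ip, Matrix.add_apply, add_sq, Finset.sum_add_distrib, Finset.mul_sum]
  ring_nf

lemma frobSq_neg (A : Matrix (Fin n) (Fin n) ℝ) : frobSq (-A) = frobSq A := by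
  simp [frobSq]

lemma eq_zero_of_frobSq (A : Matrix (Fin n) (Fin n) ℝ) (h : frobSq A = 0) : A = 0 := by
  ext i j
  have h1 := (Finset.sum_eq_zero_iff_of_nonneg
    (fun i _ => Finset.sum_nonneg fun j _ => sq_nonneg (A i j))).mp h i (Finset.mem_univ i)
  have h2 := (Finset.sum_eq_zero_iff_of_nonneg
    (fun j _ => sq_nonneg (A i j))).mp h1 j (Finset.mem_univ j)
  simpa using pow_eq_zero_iff (n := 2) (by norm_num) |>.mp h2

lemma ip_sym_skew (A B : Matrix (Fin n) (Fin n) ℝ) (hA : Aᵀ = A) (hB : Bᵀ = -B) :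
    ip A B = 0 := by
  have h1 : Matrix.trace (A * B) = - Matrix.trace (A * B) := by
    conv_lhs => rw [← Matrix.trace_transpose (A * B), Matrix.transpose_mul, hA, hB,
      Matrix.neg_mul, Matrix.trace_neg, Matrix.trace_mul_comm]
  rw [ip_eq_trace, hB, mul_neg, Matrix.trace_neg]
  linarith

lemma rot (A B C D : Matrix (Fin n) (Fin n) ℝ) :
    Matrix.trace (A * (B * (C * D))) = Matrix.trace (B * (C * (D * A))) := by
  rw [Matrix.trace_mul_comm, mul_assoc, mul_assoc]

lemma jac (A B C D : Matrix (Fin n) (Fin n) ℝ) :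
    Matrix.trace (mcomm A C * mcomm B D) =
      Matrix.trace (mcomm A D * mcomm B C) + Matrix.trace (mcomm A B * mcomm C D) := by
  simp only [mcomm, sub_mul, mul_sub, Matrix.trace_sub, mul_assoc]
  rw [rot C A B D, rot C A D B, rot D A B C, rot D A C B, rot B A C D, rot B A D C]
  ring

lemma tsym_ss (A B : Matrix (Fin n) (Fin n) ℝ) (hA : Aᵀ = A) (hB : Bᵀ = B) :
    (mcomm A B)ᵀ = -(mcomm A B) := by
  simp [mcomm, Matrix.transpose_sub, Matrix.transpose_mul, hA, hB, neg_sub]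

lemma tsym_sk (A B : Matrix (Fin n) (Fin n) ℝ) (hA : Aᵀ = A) (hB : Bᵀ = -B) :
    (mcomm A B)ᵀ = mcomm A B := by
  simp only [mcomm, Matrix.transpose_sub, Matrix.transpose_mul, hA, hB,
    Matrix.neg_mul, Matrix.mul_neg, sub_neg_eq_add, neg_sub]
  abel

lemma tsym_ks (A B : Matrix (Fin n) (Fin n) ℝ) (hA : Aᵀ = -A) (hB : Bᵀ = B) :
    (mcomm A B)ᵀ = mcomm A B := by
  simp only [mcomm, Matrix.transpose_sub, Matrix.transpose_mul, hA, hB,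
    Matrix.neg_mul, Matrix.mul_neg, sub_neg_eq_add, neg_sub]
  abel

lemma tsym_kk (A B : Matrix (Fin n) (Fin n) ℝ) (hA : Aᵀ = -A) (hB : Bᵀ = -B) :
    (mcomm A B)ᵀ = -(mcomm A B) := by
  simp only [mcomm, Matrix.transpose_sub, Matrix.transpose_mul, hA, hB,
    Matrix.neg_mul, Matrix.mul_neg, neg_neg, neg_sub]

lemma mcomm_smul_left (c : ℝ) (A B : Matrix (Fin n) (Fin n) ℝ) :
    mcomm (c • A) B = c • mcomm A B := by
  simp [mcomm, smul_sub, smul_mul_assoc, mul_smul_comm]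

lemma mcomm_smul_right (c : ℝ) (A B : Matrix (Fin n) (Fin n) ℝ) :
    mcomm A (c • B) = c • mcomm A B := by
  simp [mcomm, smul_sub, smul_mul_assoc, mul_smul_comm]

lemma frobSq_mcomm_smul (c d : ℝ) (A B : Matrix (Fin n) (Fin n) ℝ) :
    frobSq (mcomm (c • A) (d • B)) = c ^ 2 * d ^ 2 * frobSq (mcomm A B) := by
  rw [mcomm_smul_left, mcomm_smul_right, smul_smul, frobSq_smul]
  ring

lemma frobSq_mcomm_comm (A B : Matrix (Fin n) (Fin n) ℝ) :
    frobSq (mcomm A B) = frobSq (mcomm B A) := by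
  have : mcomm B A = -(mcomm A B) := by simp [mcomm]
  rw [this, frobSq_neg]

lemma sym_skew_decomp (X : Matrix (Fin n) (Fin n) ℝ) :
    ∃ A B, Aᵀ = A ∧ Bᵀ = -B ∧ X = A + B := by
  refine ⟨(2⁻¹ : ℝ) • (X + Xᵀ), (2⁻¹ : ℝ) • (X - Xᵀ), ?_, ?_, ?_⟩
  · rw [Matrix.transpose_smul, Matrix.transpose_add, Matrix.transpose_transpose, add_comm]
  · rw [Matrix.transpose_smul, Matrix.transpose_sub, Matrix.transpose_transpose,
      ← smul_neg, neg_sub]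
  · rw [← smul_add]
    have h : X + Xᵀ + (X - Xᵀ) = (2 : ℝ) • X := by rw [two_smul]; abel
    rw [h, smul_smul]; norm_num

end BWaux

set_option maxHeartbeats 1600000 in
/-- P(n,2,2) implies the Böttcher–Wenzel inequality Q(n). -/
theorem P_n_2_2_implies_BW (n : ℕ) (hn : 1 ≤ n)
    (hP : ∀ A₁ A₂ A₃ A₄ : Matrix (Fin n) (Fin n) ℝ,
      A₁.IsSymm → A₂.IsSymm → A₃ᵀ = -A₃ → A₄ᵀ = -A₄ →
      (frobSq A₁ + frobSq A₂ + frobSq A₃ + frobSq A₄) ^ 2 ≥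
        2 * (frobSq (mcomm A₁ A₂) + frobSq (mcomm A₁ A₃) + frobSq (mcomm A₁ A₄) +
              frobSq (mcomm A₂ A₃) + frobSq (mcomm A₂ A₄) + frobSq (mcomm A₃ A₄))) :
    ∀ X Y : Matrix (Fin n) (Fin n) ℝ,
      frobSq (mcomm X Y) ≤ 2 * frobSq X * frobSq Y := by
  intro X Y
  by_cases hx0 : frobSq X = 0
  · have hX : X = 0 := BWaux.eq_zero_of_frobSq X hx0
    subst hX
    simp [mcomm, frobSq]
  by_cases hy0 : frobSq Y = 0
  · have hY : Y = 0 := BWaux.eq_zero_of_frobSq Y hy0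
    subst hY
    simp [mcomm, frobSq]
  have hx : 0 < frobSq X := lt_of_le_of_ne (BWaux.frobSq_nonneg X) (Ne.symm hx0)
  have hy : 0 < frobSq Y := lt_of_le_of_ne (BWaux.frobSq_nonneg Y) (Ne.symm hy0)
  set x := frobSq X with hxdef
  set y := frobSq Y with hydef
  -- symmetric / skew decomposition
  obtain ⟨A, B, hA, hB, hXd⟩ := BWaux.sym_skew_decomp X
  obtain ⟨C, D, hC, hD, hYd⟩ := BWaux.sym_skew_decomp Y
  have hxAB : x = frobSq A + frobSq B := by
    rw [hxdef]
    conv_lhs => rw [hXd]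
    rw [BWaux.frobSq_add, BWaux.ip_sym_skew A B hA hB]
    ring
  have hyCD : y = frobSq C + frobSq D := by
    rw [hydef]
    conv_lhs => rw [hYd]
    rw [BWaux.frobSq_add, BWaux.ip_sym_skew C D hC hD]
    ring
  -- scaling parameters
  set s := Real.sqrt y with hsdef
  set t := Real.sqrt x with htdef
  have hs2 : s ^ 2 = y := Real.sq_sqrt hy.le
  have ht2 : t ^ 2 = x := Real.sq_sqrt hx.le
  -- apply P(n,2,2)
  have hP' := hP (s • A) (t • C) (s • B) (t • D)
    (by rw [Matrix.IsSymm, Matrix.transpose_smul, hA])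
    (by rw [Matrix.IsSymm, Matrix.transpose_smul, hC])
    (by rw [Matrix.transpose_smul, hB, smul_neg])
    (by rw [Matrix.transpose_smul, hD, smul_neg])
  rw [BWaux.frobSq_smul, BWaux.frobSq_smul, BWaux.frobSq_smul, BWaux.frobSq_smul,
    BWaux.frobSq_mcomm_smul, BWaux.frobSq_mcomm_smul, BWaux.frobSq_mcomm_smul,
    BWaux.frobSq_mcomm_smul, BWaux.frobSq_mcomm_smul, BWaux.frobSq_mcomm_smul,
    hs2, ht2] at hP'
  -- names for the six commutator norms
  set fAC := frobSq (mcomm A C) with hfAC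
  set fAD := frobSq (mcomm A D) with hfAD
  set fBC := frobSq (mcomm B C) with hfBC
  set fBD := frobSq (mcomm B D) with hfBD
  set fAB := frobSq (mcomm A B) with hfAB
  set fCD := frobSq (mcomm C D) with hfCD
  have hCB : frobSq (mcomm C B) = fBC := by rw [hfBC, BWaux.frobSq_mcomm_comm]
  rw [hCB] at hP'
  -- decomposition of the commutator
  have hcomm : mcomm X Y = (mcomm A C + mcomm B D) + (mcomm A D + mcomm B C) := by
    rw [hXd, hYd]
    simp only [mcomm, Matrix.add_mul, Matrix.mul_add]
    abel
  have hKskew : (mcomm A C + mcomm B D)ᵀ = -(mcomm A C + mcomm B D) := by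
    rw [Matrix.transpose_add, BWaux.tsym_ss A C hA hC, BWaux.tsym_kk B D hB hD, neg_add]
  have hSsym : (mcomm A D + mcomm B C)ᵀ = mcomm A D + mcomm B C := by
    rw [Matrix.transpose_add, BWaux.tsym_sk A D hA hD, BWaux.tsym_ks B C hB hC]
  -- Frobenius norm of the commutator
  have hfXY : frobSq (mcomm X Y) =
      fAC + fBD + fAD + fBC
        + 2 * BWaux.ip (mcomm A C) (mcomm B D) + 2 * BWaux.ip (mcomm A D) (mcomm B C) := by
    rw [hcomm, BWaux.frobSq_add,
      BWaux.ip_comm, BWaux.ip_sym_skew _ _ hSsym hKskew,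
      BWaux.frobSq_add, BWaux.frobSq_add]
    ring
  -- Jacobi-type identity for the cross terms
  have hjac : BWaux.ip (mcomm A C) (mcomm B D) + BWaux.ip (mcomm A D) (mcomm B C)
      = - BWaux.ip (mcomm A B) (mcomm C D) := by
    have e1 : BWaux.ip (mcomm A C) (mcomm B D) = - Matrix.trace (mcomm A C * mcomm B D) := by
      rw [BWaux.ip_eq_trace, BWaux.tsym_kk B D hB hD, Matrix.mul_neg, Matrix.trace_neg]
    have e2 : BWaux.ip (mcomm A D) (mcomm B C) = Matrix.trace (mcomm A D * mcomm B C) := by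
      rw [BWaux.ip_eq_trace, BWaux.tsym_ks B C hB hC]
    have e3 : BWaux.ip (mcomm A B) (mcomm C D) = Matrix.trace (mcomm A B * mcomm C D) := by
      rw [BWaux.ip_eq_trace, BWaux.tsym_sk C D hC hD]
    have := BWaux.jac A B C D
    rw [e1, e2, e3]
    linarith
  -- AM-GM for the remaining cross term
  have hamgm : 0 ≤ frobSq ((s ^ 2) • mcomm A B + (t ^ 2) • mcomm C D) :=
    BWaux.frobSq_nonneg _
  rw [BWaux.frobSq_add, BWaux.frobSq_smul, BWaux.frobSq_smul,
    BWaux.ip_smul_left, BWaux.ip_smul_right, hs2, ht2] at hamgm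
  -- rewrite the LHS of hP'
  have hLHS : y * frobSq A + x * frobSq C + y * frobSq B + x * frobSq D = 2 * (x * y) := by
    calc y * frobSq A + x * frobSq C + y * frobSq B + x * frobSq D
        = y * (frobSq A + frobSq B) + x * (frobSq C + frobSq D) := by ring
      _ = y * x + x * y := by rw [← hxAB, ← hyCD]
      _ = 2 * (x * y) := by ring
  rw [hLHS] at hP'
  have hf2 : frobSq (mcomm X Y) =
      fAC + fBD + fAD + fBC - 2 * BWaux.ip (mcomm A B) (mcomm C D) := by
    rw [hfXY]; linarith [hjac]
  -- put everything together
  have hfin : x * y * frobSq (mcomm X Y) ≤ 2 * (x * y) * (x * y) := by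
    rw [hf2]; nlinarith [hP', hamgm]
  have hxy : 0 < x * y := mul_pos hx hy
  nlinarith [hfin, hxy, mul_pos hxy hxy]
end

section
/- Let A₁, A₂ be real symmetric n×n matrices and let A₃, A₄ be real skew-symmetric n×n matrices. Then ⟨[A₁,A₂],[A₃,A₄]⟩ + ⟨[A₁,A₄],[A₃,A₂]⟩ = −⟨[A₁,A₃],[A₂,A₄]⟩, where ⟨·,·⟩ is the Frobenius inner product. -/
open Matrix BigOperators

/-- The Frobenius inner product `⟨A, B⟩ = tr (A Bᵀ)`. -/
def frobInner {n : ℕ} (A B : Matrix (Fin n) (Fin n) ℝ) : ℝ :=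
  (A * Bᵀ).trace

/-- Cyclic invariance of the trace for a product of four matrices. -/
lemma cyc4 {n : ℕ} (a b c d : Matrix (Fin n) (Fin n) ℝ) :
    (a * (b * (c * d))).trace = (b * (c * (d * a))).trace := by
  rw [trace_mul_comm]; simp only [mul_assoc]

/-- For `A₁, A₂` symmetric and `A₃, A₄` skew-symmetric,
`⟨[A₁,A₂],[A₃,A₄]⟩ + ⟨[A₁,A₄],[A₃,A₂]⟩ = −⟨[A₁,A₃],[A₂,A₄]⟩`. -/
theorem frobInner_comm_identity (n : ℕ) (A₁ A₂ A₃ A₄ : Matrix (Fin n) (Fin n) ℝ)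
    (h₁ : A₁.IsSymm) (h₂ : A₂.IsSymm) (h₃ : A₃ᵀ = -A₃) (h₄ : A₄ᵀ = -A₄) :
    frobInner (mcomm A₁ A₂) (mcomm A₃ A₄) + frobInner (mcomm A₁ A₄) (mcomm A₃ A₂) =
      -frobInner (mcomm A₁ A₃) (mcomm A₂ A₄) := by
  simp only [frobInner, mcomm, transpose_sub, transpose_mul, h₁.eq, h₂.eq, h₃, h₄,
    Matrix.mul_sub, Matrix.sub_mul, Matrix.neg_mul, Matrix.mul_neg, Matrix.mul_add,
    Matrix.add_mul, trace_sub, trace_neg, trace_add, neg_neg, sub_neg_eq_add, mul_assoc]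
  linear_combination -cyc4 A₂ A₁ A₄ A₃ + cyc4 A₂ A₁ A₃ A₄ + cyc4 A₄ A₁ A₂ A₃ -
    cyc4 A₄ A₁ A₃ A₂ + cyc4 A₃ A₁ A₄ A₂ - cyc4 A₃ A₁ A₂ A₄
end

section
/- Let A₁, A₂ be real symmetric n×n matrices, let A₃, A₄ be real skew-symmetric n×n matrices, and set X = A₁ + A₃ and Y = A₂ + A₄. Then ‖[X,Y]‖² ≤ Σ_{1≤i<j≤4} ‖[A_i,A_j]‖². -/
open Matrix BigOperators

/-- The Frobenius inner product. -/
noncomputable def fip {n : ℕ} (A B : Matrix (Fin n) (Fin n) ℝ) : ℝ :=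
  ∑ i, ∑ j, A i j * B i j

lemma fip_comm {n : ℕ} (A B : Matrix (Fin n) (Fin n) ℝ) : fip A B = fip B A := by
  simp [fip, mul_comm]

lemma frobSq_eq_fip {n : ℕ} (A : Matrix (Fin n) (Fin n) ℝ) : frobSq A = fip A A := by
  simp [frobSq, fip, sq]

lemma frobSq_nonneg {n : ℕ} (A : Matrix (Fin n) (Fin n) ℝ) : 0 ≤ frobSq A :=
  Finset.sum_nonneg fun i _ => Finset.sum_nonneg fun j _ => sq_nonneg _

lemma frobSq_neg {n : ℕ} (A : Matrix (Fin n) (Fin n) ℝ) : frobSq (-A) = frobSq A := by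
  simp [frobSq]

lemma mcomm_swap {n : ℕ} (A B : Matrix (Fin n) (Fin n) ℝ) : mcomm B A = -(mcomm A B) := by
  simp [mcomm]

lemma frobSq_add {n : ℕ} (A B : Matrix (Fin n) (Fin n) ℝ) :
    frobSq (A + B) = frobSq A + frobSq B + 2 * fip A B := by
  simp only [frobSq, fip, Matrix.add_apply, ← Finset.sum_add_distrib, Finset.mul_sum]
  congr 1; ext i; congr 1; ext j; ring

lemma fip_transpose {n : ℕ} (A B : Matrix (Fin n) (Fin n) ℝ) : fip Aᵀ Bᵀ = fip A B := by
  rw [fip, Finset.sum_comm]; rfl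

lemma fip_symm_skew {n : ℕ} (P Q : Matrix (Fin n) (Fin n) ℝ)
    (hP : Pᵀ = P) (hQ : Qᵀ = -Q) : fip P Q = 0 := by
  have h := fip_transpose P Q
  rw [hP, hQ] at h
  have h2 : fip P (-Q) = -fip P Q := by simp [fip]
  rw [h2] at h
  linarith

lemma fip_eq_trace {n : ℕ} (A B : Matrix (Fin n) (Fin n) ℝ) :
    fip A B = trace (A * Bᵀ) := by
  simp [fip, trace, Matrix.mul_apply, Matrix.diag, Matrix.transpose_apply]

lemma cyc4_s7 {n : ℕ} (A B C D : Matrix (Fin n) (Fin n) ℝ) :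
    trace (A*B*C*D) = trace (B*C*D*A) := by
  rw [mul_assoc, mul_assoc, trace_mul_comm, ← mul_assoc]

lemma jacobi_tr {n : ℕ} (A B C D : Matrix (Fin n) (Fin n) ℝ) :
    trace (mcomm A B * mcomm C D) + trace (mcomm A C * mcomm D B)
      + trace (mcomm A D * mcomm B C) = 0 := by
  simp only [mcomm, sub_mul, mul_sub, trace_sub, trace_add, ← mul_assoc]
  rw [cyc4_s7 B A C D, cyc4_s7 B A D C, cyc4_s7 C A D B, cyc4_s7 C A B D, cyc4_s7 D A B C, cyc4_s7 D A C B]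
  ring

lemma mcomm_transpose {n : ℕ} (A B : Matrix (Fin n) (Fin n) ℝ) :
    (mcomm A B)ᵀ = mcomm Bᵀ Aᵀ := by
  simp [mcomm, Matrix.transpose_sub, Matrix.transpose_mul]

/-- If `A₁, A₂` are symmetric, `A₃, A₄` are skew-symmetric, `X = A₁ + A₃`, `Y = A₂ + A₄`,
then `‖[X,Y]‖² ≤ Σ_{i<j} ‖[A_i,A_j]‖²`. -/
theorem comm_sq_le_sum_pairs (n : ℕ) (A₁ A₂ A₃ A₄ X Y : Matrix (Fin n) (Fin n) ℝ)
    (h₁ : A₁.IsSymm) (h₂ : A₂.IsSymm) (h₃ : A₃ᵀ = -A₃) (h₄ : A₄ᵀ = -A₄)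
    (hX : X = A₁ + A₃) (hY : Y = A₂ + A₄) :
    frobSq (mcomm X Y) ≤
      frobSq (mcomm A₁ A₂) + frobSq (mcomm A₁ A₃) + frobSq (mcomm A₁ A₄) +
        frobSq (mcomm A₂ A₃) + frobSq (mcomm A₂ A₄) + frobSq (mcomm A₃ A₄) := by
  have h₁' : A₁ᵀ = A₁ := h₁
  have h₂' : A₂ᵀ = A₂ := h₂
  set C12 := mcomm A₁ A₂ with hC12
  set C13 := mcomm A₁ A₃ with hC13
  set C14 := mcomm A₁ A₄ with hC14
  set C23 := mcomm A₂ A₃ with hC23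
  set C24 := mcomm A₂ A₄ with hC24
  set C34 := mcomm A₃ A₄ with hC34
  set C32 := mcomm A₃ A₂ with hC32
  -- transpose facts
  have tC12 : C12ᵀ = -C12 := by
    rw [hC12, mcomm_transpose, h₁', h₂', mcomm_swap]
  have tC34 : C34ᵀ = -C34 := by
    rw [hC34, mcomm_transpose, h₃, h₄]
    simp only [mcomm, neg_mul, mul_neg, neg_sub_neg]
    abel
  have tC13 : C13ᵀ = C13 := by
    rw [hC13, mcomm_transpose, h₁', h₃]
    simp only [mcomm, neg_mul, mul_neg]
    abel
  have tC14 : C14ᵀ = C14 := by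
    rw [hC14, mcomm_transpose, h₁', h₄]
    simp only [mcomm, neg_mul, mul_neg]
    abel
  have tC24 : C24ᵀ = C24 := by
    rw [hC24, mcomm_transpose, h₂', h₄]
    simp only [mcomm, neg_mul, mul_neg]
    abel
  have tC32 : C32ᵀ = C32 := by
    rw [hC32, mcomm_transpose, h₂', h₃]
    simp only [mcomm, neg_mul, mul_neg]
    abel
  -- decomposition of [X,Y]
  have hexp : mcomm X Y = (C12 + C34) + (C14 + C32) := by
    subst hX hY
    simp only [hC12, hC34, hC14, hC32, mcomm, add_mul, mul_add]
    abel
  -- S skew, T symmetric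
  have tS : (C12 + C34)ᵀ = -(C12 + C34) := by
    rw [Matrix.transpose_add, tC12, tC34]; abel
  have tT : (C14 + C32)ᵀ = C14 + C32 := by
    rw [Matrix.transpose_add, tC14, tC32]
  -- split
  have hsplit : frobSq (mcomm X Y) = frobSq (C12 + C34) + frobSq (C14 + C32) := by
    rw [hexp, frobSq_add, fip_comm, fip_symm_skew _ _ tT tS]
    ring
  have hS : frobSq (C12 + C34) = frobSq C12 + frobSq C34 + 2 * fip C12 C34 :=
    frobSq_add _ _
  have hT : frobSq (C14 + C32) = frobSq C14 + frobSq C32 + 2 * fip C14 C32 :=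
    frobSq_add _ _
  -- trace expressions for the cross terms
  have e1 : fip C12 C34 = -trace (C12 * C34) := by
    rw [fip_eq_trace, tC34, mul_neg, trace_neg]
  have e2 : fip C14 C32 = trace (C14 * C32) := by
    rw [fip_eq_trace, tC32]
  have e3 : fip C13 C24 = trace (C13 * C24) := by
    rw [fip_eq_trace, tC24]
  -- Jacobi identity
  have hj := jacobi_tr A₁ A₂ A₃ A₄
  rw [← hC12, ← hC34, ← hC13, ← hC14, ← hC23] at hj
  have h42 : mcomm A₄ A₂ = -C24 := by rw [hC24, mcomm_swap]
  rw [h42] at hj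
  have h2332 : C23 = -C32 := by rw [hC23, hC32, mcomm_swap]
  rw [h2332] at hj
  simp only [mul_neg, neg_mul, trace_neg] at hj
  -- key: cross terms sum to -fip C13 C24
  have key : fip C12 C34 + fip C14 C32 = -fip C13 C24 := by
    rw [e1, e2, e3]; linarith
  -- bound: -fip C13 C24 ≤ (frobSq C13 + frobSq C24)/2
  have hbound : 0 ≤ frobSq C13 + frobSq C24 + 2 * fip C13 C24 := by
    rw [← frobSq_add]; exact frobSq_nonneg _
  have h3223 : frobSq C32 = frobSq C23 := by
    rw [h2332, frobSq_neg]
  have h13 := frobSq_nonneg C13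
  have h24 := frobSq_nonneg C24
  rw [hsplit, hS, hT]
  rw [h3223]
  linarith [key]
end

section
/- Fix n ≥ 1 and m ≥ 1. Suppose that for every k with 1 ≤ k ≤ m and all real symmetric n×n matrices A₁, …, A_k one has (Σ_{r=1}^k ‖A_r‖²)² ≥ 2 Σ_{1≤r<s≤k} ‖[A_r,A_s]‖² (the DDVV inequality P(n,k)). Then for all real symmetric n×n matrices A₁, …, A_m one has 2 Σ_{1≤i<j≤m} ‖[A_i,A_j]‖² ≤ (3/2)(Σ_{i=1}^m ‖A_i‖²)² − Σ_{i=1}^m ‖A_i‖⁴ (the Li–Li inequality P′(n,m)). In other words, the DDVV inequality implies the Li–Li inequality. -/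
open Matrix BigOperators

lemma frobSq_smul {n : ℕ} (t : ℝ) (A : Matrix (Fin n) (Fin n) ℝ) :
    frobSq (t • A) = t ^ 2 * frobSq A := by
  simp [frobSq, Matrix.smul_apply, mul_pow, Finset.mul_sum]

lemma frobSq_eq_zero {n : ℕ} {A : Matrix (Fin n) (Fin n) ℝ} (h : frobSq A = 0) : A = 0 := by
  ext i j
  have h1 := (Finset.sum_eq_zero_iff_of_nonneg (fun i _ => Finset.sum_nonneg
    (fun j _ => sq_nonneg (A i j)))).mp h i (Finset.mem_univ i)
  have h2 := (Finset.sum_eq_zero_iff_of_nonneg (fun j _ => sq_nonneg (A i j))).mp h1 j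
    (Finset.mem_univ j)
  simpa using pow_eq_zero_iff (n := 2) (by norm_num) |>.mp h2

lemma mcomm_smul {n : ℕ} (t s : ℝ) (A B : Matrix (Fin n) (Fin n) ℝ) :
    mcomm (t • A) (s • B) = (t * s) • mcomm A B := by
  simp only [mcomm, smul_mul_assoc, mul_smul_comm, smul_sub, smul_smul, mul_comm]

lemma isSymm_smul {n : ℕ} (t : ℝ) {A : Matrix (Fin n) (Fin n) ℝ} (h : A.IsSymm) :
    (t • A).IsSymm := by
  unfold Matrix.IsSymm at *
  rw [Matrix.transpose_smul, h]

lemma sq_sum_eq {m : ℕ} (x : Fin m → ℝ) :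
    (∑ i, x i) ^ 2 = ∑ i, (x i) ^ 2 + 2 * ∑ i, ∑ j, (if i < j then x i * x j else 0) := by
  have expand : (∑ i, x i) ^ 2 = ∑ i, ∑ j, x i * x j := by
    rw [sq, Finset.sum_mul_sum]
  have split : ∀ i j : Fin m, x i * x j =
      (if i < j then x i * x j else 0) + (if j < i then x i * x j else 0) +
      (if i = j then x i * x j else 0) := by
    intro i j
    rcases lt_trichotomy i j with h | h | h
    · simp [h, not_lt_of_gt h, h.ne]
    · simp [h]
    · simp [h, not_lt_of_gt h, h.ne']
  rw [expand]
  calc ∑ i, ∑ j, x i * x j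
      = ∑ i, ∑ j, ((if i < j then x i * x j else 0) + (if j < i then x i * x j else 0) +
        (if i = j then x i * x j else 0)) := by
        refine Finset.sum_congr rfl fun i _ => Finset.sum_congr rfl fun j _ => split i j
    _ = (∑ i, ∑ j, (if i < j then x i * x j else 0)) +
        (∑ i, ∑ j, (if j < i then x i * x j else 0)) +
        (∑ i, ∑ j, (if i = j then x i * x j else 0)) := by
        simp [Finset.sum_add_distrib]
    _ = (∑ i, ∑ j, (if i < j then x i * x j else 0)) +
        (∑ i, ∑ j, (if i < j then x i * x j else 0)) +
        ∑ i, (x i) ^ 2 := by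
        congr 1
        · congr 1
          rw [Finset.sum_comm]
          refine Finset.sum_congr rfl fun i _ => Finset.sum_congr rfl fun j _ => ?_
          by_cases h : i < j <;> simp [h, mul_comm]
        · refine Finset.sum_congr rfl fun i _ => ?_
          simp [Finset.sum_ite_eq, sq]
    _ = _ := by ring

/-- The DDVV inequality P(n,k) for all `1 ≤ k ≤ m` implies the Li–Li inequality P′(n,m). -/
theorem ddvv_implies_li_li (n m : ℕ) (hn : 1 ≤ n) (hm : 1 ≤ m)
    (hP : ∀ k : ℕ, 1 ≤ k → k ≤ m → ∀ A : Fin k → Matrix (Fin n) (Fin n) ℝ,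
      (∀ r, (A r).IsSymm) →
      (∑ r, frobSq (A r)) ^ 2 ≥
        2 * ∑ r, ∑ s, (if r < s then frobSq (mcomm (A r) (A s)) else 0)) :
    ∀ A : Fin m → Matrix (Fin n) (Fin n) ℝ, (∀ i, (A i).IsSymm) →
      2 * ∑ i, ∑ j, (if i < j then frobSq (mcomm (A i) (A j)) else 0) ≤
        (3 / 2) * (∑ i, frobSq (A i)) ^ 2 - ∑ i, (frobSq (A i)) ^ 2 := by
  intro A hA
  set a : Fin m → ℝ := fun i => frobSq (A i) with ha_def
  -- Step 1: full DDVV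
  have h1 : 2 * ∑ i, ∑ j, (if i < j then frobSq (mcomm (A i) (A j)) else 0) ≤
      (∑ i, a i) ^ 2 := hP m hm le_rfl A hA
  -- Step 2: pairwise sharp bound
  have h2 : ∀ i j : Fin m, i < j →
      2 * frobSq (mcomm (A i) (A j)) ≤ 4 * (a i * a j) := by
    intro i j hij
    have hm2 : 2 ≤ m := by
      have : (i : ℕ) < (j : ℕ) := hij
      have := j.2
      omega
    by_cases hzi : a i = 0
    · have : A i = 0 := frobSq_eq_zero hzi
      simp [this, mcomm, frobSq, hzi]
    by_cases hzj : a j = 0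
    · have : A j = 0 := frobSq_eq_zero hzj
      simp [this, mcomm, frobSq, hzj]
    have hai : 0 < a i := lt_of_le_of_ne (frobSq_nonneg _) (Ne.symm hzi)
    have haj : 0 < a j := lt_of_le_of_ne (frobSq_nonneg _) (Ne.symm hzj)
    set B : Fin 2 → Matrix (Fin n) (Fin n) ℝ :=
      ![Real.sqrt (a j) • A i, Real.sqrt (a i) • A j] with hB
    have hBsymm : ∀ r, (B r).IsSymm := by
      intro r
      fin_cases r
      · exact isSymm_smul _ (hA i)
      · exact isSymm_smul _ (hA j)
    have key := hP 2 (by norm_num) hm2 B hBsymm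
    have hsj : Real.sqrt (a j) ^ 2 = a j := Real.sq_sqrt haj.le
    have hsi : Real.sqrt (a i) ^ 2 = a i := Real.sq_sqrt hai.le
    have hsum : ∑ r, frobSq (B r) = a j * a i + a i * a j := by
      rw [Fin.sum_univ_two]
      show frobSq (Real.sqrt (a j) • A i) + frobSq (Real.sqrt (a i) • A j) = _
      rw [frobSq_smul, frobSq_smul, hsj, hsi]
    have hcomm : (∑ r, ∑ s, (if r < s then frobSq (mcomm (B r) (B s)) else 0)) =
        (a j * a i) * frobSq (mcomm (A i) (A j)) := by
      simp only [Fin.sum_univ_two]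
      have h01 : (0 : Fin 2) < 1 := by decide
      have h00 : ¬ (0 : Fin 2) < 0 := by decide
      have h10 : ¬ (1 : Fin 2) < 0 := by decide
      have h11 : ¬ (1 : Fin 2) < 1 := by decide
      rw [if_pos h01, if_neg h00, if_neg h10, if_neg h11]
      show 0 + frobSq (mcomm (Real.sqrt (a j) • A i) (Real.sqrt (a i) • A j)) + (0 + 0) = _
      rw [mcomm_smul, frobSq_smul, mul_pow, hsj, hsi]
      ring
    rw [hsum, hcomm] at key
    nlinarith [mul_pos hai haj, frobSq_nonneg (mcomm (A i) (A j)), key]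
  -- Step 3: sum of pairwise bounds
  have h3 : 2 * ∑ i, ∑ j, (if i < j then frobSq (mcomm (A i) (A j)) else 0) ≤
      4 * ∑ i, ∑ j, (if i < j then a i * a j else 0) := by
    rw [Finset.mul_sum, Finset.mul_sum]
    refine Finset.sum_le_sum fun i _ => ?_
    rw [Finset.mul_sum, Finset.mul_sum]
    refine Finset.sum_le_sum fun j _ => ?_
    by_cases h : i < j
    · simp only [if_pos h]
      linarith [h2 i j h]
    · simp [h]
  have key := sq_sum_eq a
  linarith
end
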